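/- arXiv:1907.08247 — 2 statements merged into one kernel-verified Lean document; each statement's English description precedes it below -/
import Mathlib

section
/- For every n ≥ 1, the number of distinct Parikh vectors among length-2^n factors of the ordinary paperfolding word is exactly 3. -/
/-- letter of the ordinary paperfolding word at position `m` (positions start at 1):
writing `m = k * 2^j` with `k` odd, the letter is `0` if `k ≡ 1 (mod 4)` and `1` otherwise. -/
def pf (m : ℕ) : ℕ := if (m / 2 ^ (padicValNat 2 m)) % 4 = 1 then 0 else 1

/-- the length-`n` factor of `w` starting at position `i`. -/
def factorAt (w : ℕ → ℕ) (i n : ℕ) : List ℕ := (List.range n).map (fun j => w (i + j))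

/-- `u` is a factor of the 1-indexed infinite word `w`. -/
def IsFactor (w : ℕ → ℕ) (u : List ℕ) : Prop := ∃ i ≥ 1, u = factorAt w i u.length

lemma pf_cases (m : ℕ) : pf m = 0 ∨ pf m = 1 := by
  unfold pf; split <;> simp

lemma pf_two_mul (m : ℕ) (hm : 0 < m) : pf (2*m) = pf m := by
  unfold pf
  rw [padicValNat.mul (by norm_num) (by omega), padicValNat.self (by norm_num),
    pow_add, pow_one, Nat.mul_div_mul_left _ _ (by norm_num)]

lemma pf_odd (k : ℕ) : pf (2*k+1) = k % 2 := by
  unfold pf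
  rw [padicValNat.eq_zero_of_not_dvd (by omega)]
  simp only [pow_zero, Nat.div_one]
  split <;> omega

/-- sum of `pf` over the window `[i, i + 2^n)`. -/
def S (i n : ℕ) : ℕ := ∑ j ∈ Finset.range (2^n), pf (i+j)

lemma sum_pair (f : ℕ → ℕ) (N : ℕ) :
    ∑ j ∈ Finset.range (2*N), f j = ∑ t ∈ Finset.range N, (f (2*t) + f (2*t+1)) := by
  induction N with
  | zero => simp
  | succ N ih =>
      have : 2*(N+1) = (2*N)+1+1 := by ring
      rw [this, Finset.sum_range_succ, Finset.sum_range_succ, ih, Finset.sum_range_succ]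
      ring

lemma sum_parity (a N : ℕ) : ∑ t ∈ Finset.range (2*N), ((a+t) % 2) = N := by
  induction N with
  | zero => simp
  | succ N ih =>
      have : 2*(N+1) = (2*N)+1+1 := by ring
      rw [this, Finset.sum_range_succ, Finset.sum_range_succ, ih]
      omega

lemma S_one (i : ℕ) : S i 1 = pf i + pf (i+1) := by
  simp [S, Finset.sum_range_succ]

lemma S_rec (i n : ℕ) (hi : 1 ≤ i) (hn : 1 ≤ n) :
    S i (n+1) = S ((i+1)/2) n + 2^(n-1) := by
  have h2 : 2^(n+1) = 2 * 2^n := by ring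
  have hN : 2^n = 2 * 2^(n-1) := by
    rw [← pow_succ']; congr 1; omega
  rcases Nat.even_or_odd i with ⟨a, ha⟩ | ⟨a, ha⟩
  · -- i = 2a, a ≥ 1
    have ha1 : 1 ≤ a := by omega
    have hq : (i+1)/2 = a := by omega
    rw [S, h2, sum_pair, hq]
    have : ∀ t ∈ Finset.range (2^n), pf (i + 2*t) + pf (i + (2*t+1))
        = pf (a+t) + ((a+t) % 2) := by
      intro t _
      have e1 : i + 2*t = 2*(a+t) := by omega
      have e2 : i + (2*t+1) = 2*(a+t)+1 := by omega
      rw [e1, e2, pf_two_mul _ (by omega), pf_odd]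
    have hpar : ∑ t ∈ Finset.range (2^n), ((a+t)%2) = 2^(n-1) := by
      rw [hN, sum_parity]
    rw [Finset.sum_congr rfl this, Finset.sum_add_distrib, hpar, S]
  · -- i = 2a+1
    have hq : (i+1)/2 = a+1 := by omega
    rw [S, h2, sum_pair, hq]
    have : ∀ t ∈ Finset.range (2^n), pf (i + 2*t) + pf (i + (2*t+1))
        = ((a+t) % 2) + pf (a+1+t) := by
      intro t _
      have e1 : i + 2*t = 2*(a+t)+1 := by omega
      have e2 : i + (2*t+1) = 2*(a+t+1) := by omega
      have e3 : a+t+1 = a+1+t := by omega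
      rw [e1, e2, pf_odd, pf_two_mul _ (by omega), e3]
    have hpar : ∑ t ∈ Finset.range (2^n), ((a+t)%2) = 2^(n-1) := by
      rw [hN, sum_parity]
    rw [Finset.sum_congr rfl this, Finset.sum_add_distrib, hpar, S, Nat.add_comm]

lemma S_values (n : ℕ) (hn : 1 ≤ n) : ∀ i, 1 ≤ i →
    S i n = 2^(n-1) - 1 ∨ S i n = 2^(n-1) ∨ S i n = 2^(n-1) + 1 := by
  induction n with
  | zero => omega
  | succ n ih =>
      intro i hi
      rcases Nat.eq_zero_or_pos n with rfl | hn'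
      · rw [S_one]
        rcases pf_cases i with h1 | h1 <;> rcases pf_cases (i+1) with h2 | h2 <;> omega
      · have hrec := S_rec i n hi hn'
        have := ih hn' ((i+1)/2) (by omega)
        have hp : 1 ≤ 2^(n-1) := Nat.one_le_two_pow
        have hpp : 2^(n-1) + 2^(n-1) = 2^n := by
          rw [← two_mul, ← pow_succ']; congr 1; omega
        have hnn : n + 1 - 1 = n := by omega
        rw [hnn]
        omega

lemma pf1 : pf 1 = 0 := by have := pf_odd 0; simpa using this
lemma pf2 : pf 2 = 0 := by have := pf_two_mul 1 one_pos; rw [this]; exact pf1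
lemma pf3 : pf 3 = 1 := by have := pf_odd 1; simpa using this
lemma pf4 : pf 4 = 0 := by
  have := pf_two_mul 2 (by norm_num); rw [show (4:ℕ)=2*2 by norm_num, this]; exact pf2
lemma pf6 : pf 6 = 1 := by
  have := pf_two_mul 3 (by norm_num); rw [show (6:ℕ)=2*3 by norm_num, this]; exact pf3
lemma pf7 : pf 7 = 1 := by have := pf_odd 3; simpa using this

lemma S_scale (c : ℕ) (hc : 1 ≤ c) : ∀ n, 1 ≤ n → S (c * 2^(n-1)) n = S c 1 + 2^(n-1) - 1 := by
  intro n
  induction n with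
  | zero => omega
  | succ n ih =>
      intro _
      rcases Nat.eq_zero_or_pos n with rfl | hn'
      · simp
      · have hp : 1 ≤ 2^(n-1) := Nat.one_le_two_pow
        have hpp : 2^(n-1) + 2^(n-1) = 2^n := by
          rw [← two_mul, ← pow_succ']; congr 1; omega
        have hq : (c * 2^n + 1)/2 = c * 2^(n-1) := by
          have : c * 2^n = 2 * (c * 2^(n-1)) := by rw [← hpp]; ring
          omega
        have := S_rec (c * 2^n) n
          (by have : 1 ≤ 2^n := Nat.one_le_two_pow; nlinarith) hn'
        rw [show n+1-1 = n from rfl, this, hq, ih hn']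
        omega

lemma S_val1 (n : ℕ) (hn : 1 ≤ n) : S (2^(n-1)) n = 2^(n-1) - 1 := by
  have := S_scale 1 le_rfl n hn
  rw [one_mul] at this
  rw [this, S_one, pf1, pf2]
  omega

lemma S_val2 (n : ℕ) (hn : 1 ≤ n) : S (3 * 2^(n-1)) n = 2^(n-1) := by
  have := S_scale 3 (by norm_num) n hn
  rw [this, S_one, pf3, pf4]
  have : 1 ≤ 2^(n-1) := Nat.one_le_two_pow
  omega

lemma S_val3 (n : ℕ) (hn : 1 ≤ n) : S (6 * 2^(n-1)) n = 2^(n-1) + 1 := by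
  have := S_scale 6 (by norm_num) n hn
  rw [this, S_one, pf6, pf7]
  have : 1 ≤ 2^(n-1) := Nat.one_le_two_pow
  omega

lemma count_sum (u : List ℕ) (h : ∀ x ∈ u, x = 0 ∨ x = 1) :
    u.count 1 = u.sum ∧ u.count 0 + u.count 1 = u.length := by
  induction u with
  | nil => simp
  | cons a u ih =>
      have ha := h a (by simp)
      have ih' := ih (fun x hx => h x (by simp [hx]))
      rcases ha with rfl | rfl <;>
        simp [List.count_cons, ih'.1] <;> omega

lemma factor_counts (i n : ℕ) :
    (factorAt pf i (2^n)).count 1 = S i n ∧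
    (factorAt pf i (2^n)).count 0 = 2^n - S i n := by
  have hmem : ∀ x ∈ factorAt pf i (2^n), x = 0 ∨ x = 1 := by
    intro x hx
    simp only [factorAt, List.mem_map] at hx
    obtain ⟨j, _, rfl⟩ := hx
    exact pf_cases _
  have hsum : (factorAt pf i (2^n)).sum = S i n := rfl
  have hlen : (factorAt pf i (2^n)).length = 2^n := by simp [factorAt]
  obtain ⟨h1, h2⟩ := count_sum _ hmem
  rw [hsum] at h1
  rw [h1] at h2
  rw [hlen] at h2
  exact ⟨h1, by omega⟩

lemma S_le (i n : ℕ) : S i n ≤ 2^n := by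
  calc S i n ≤ ∑ _j ∈ Finset.range (2^n), 1 := by
        apply Finset.sum_le_sum
        intro j _
        rcases pf_cases (i+j) with h | h <;> omega
    _ = 2^n := by simp

/-- The abelian complexity of the paperfolding word at `2^n` is `3` for every `n ≥ 1`:
there are exactly three Parikh vectors among factors of length `2^n`. -/
theorem paperfolding_abelian_complexity_pow_two (n : ℕ) (hn : 1 ≤ n) :
    {p : ℕ × ℕ | ∃ u : List ℕ, IsFactor pf u ∧ u.length = 2 ^ n ∧
      p = (u.count 0, u.count 1)}.ncard = 3 := by
  have hp : 1 ≤ 2^(n-1) := Nat.one_le_two_pow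
  have hpp : 2^(n-1) + 2^(n-1) = 2^n := by
    rw [← two_mul, ← pow_succ']; congr 1; omega
  rw [Set.ncard_eq_three]
  refine ⟨(2^(n-1)+1, 2^(n-1)-1), (2^(n-1), 2^(n-1)), (2^(n-1)-1, 2^(n-1)+1),
    ?_, ?_, ?_, ?_⟩
  · intro h; rw [Prod.ext_iff] at h; omega
  · intro h; rw [Prod.ext_iff] at h; omega
  · intro h; rw [Prod.ext_iff] at h; omega
  ext p
  simp only [Set.mem_setOf_eq, Set.mem_insert_iff, Set.mem_singleton_iff]
  constructor
  · rintro ⟨u, ⟨i, hi, hu⟩, hlen, rfl⟩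
    rw [hlen] at hu
    subst hu
    obtain ⟨h1, h0⟩ := factor_counts i n
    rcases S_values n hn i hi with h | h | h
    · left; rw [h1, h0, h, Prod.ext_iff]; constructor <;> simp <;> omega
    · right; left; rw [h1, h0, h, Prod.ext_iff]; constructor <;> simp <;> omega
    · right; right; rw [h1, h0, h, Prod.ext_iff]; constructor <;> simp <;> omega
  · have hwit : ∀ i, 1 ≤ i →
        (∃ u : List ℕ, IsFactor pf u ∧ u.length = 2 ^ n ∧
          ((2^n - S i n : ℕ), S i n) = (u.count 0, u.count 1)) := by
      intro i hi
      refine ⟨factorAt pf i (2^n), ⟨i, hi, ?_⟩, by simp [factorAt], ?_⟩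
      · congr 1
        simp [factorAt]
      · obtain ⟨h1, h0⟩ := factor_counts i n
        rw [h1, h0]
    rintro (rfl | rfl | rfl)
    · obtain ⟨u, h⟩ := hwit (2^(n-1)) hp
      rw [S_val1 n hn] at h
      exact ⟨u, h.1, h.2.1, by rw [h.2.2.symm, Prod.ext_iff]; constructor <;> simp <;> omega⟩
    · obtain ⟨u, h⟩ := hwit (3 * 2^(n-1)) (by omega)
      rw [S_val2 n hn] at h
      exact ⟨u, h.1, h.2.1, by rw [h.2.2.symm, Prod.ext_iff]; constructor <;> simp <;> omega⟩
    · obtain ⟨u, h⟩ := hwit (6 * 2^(n-1)) (by omega)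
      rw [S_val3 n hn] at h
      exact ⟨u, h.1, h.2.1, by rw [h.2.2.symm, Prod.ext_iff]; constructor <;> simp <;> omega⟩
end

section
/- For the paperfolding word, for every n ≥ 1 the abelian complexity satisfies ρ(n+1) = ρ(n) + 1 or ρ(n+1) = ρ(n) − 1. -/
/-- abelian complexity: number of Parikh vectors of length-`n` factors of `w`. -/
noncomputable def rho (w : ℕ → ℕ) (n : ℕ) : ℕ :=
  {p : ℕ × ℕ | ∃ u : List ℕ, IsFactor w u ∧ u.length = n ∧
    p = (u.count 0, u.count 1)}.ncard

/-!
For a binary word the Parikh vector of a factor of length `n` is determined by its number of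
ones, and sliding a window by one position changes that number by at most one. Hence the
numbers of ones of the length-`n` factors form an interval `[a, b]` and `ρ(n) = b - a + 1`.
For the paperfolding word the reflection `pf p + pf (2^(k+1) - p) = 1` (for `0 < p < 2^k`)
maps each factor to one with the complementary number of ones, so `a + b = n` and
`ρ(n) = 2b - n + 1`. Finally `b` grows by `0` or `1` from `n` to `n + 1`, which makes
`ρ(n + 1) - ρ(n)` equal to `-1` or `1`.
-/

theorem exists_apply_eq_of_mem_uIcc {f : ℕ → ℕ}
    (hf : ∀ i, f (i + 1) ≤ f i + 1 ∧ f i ≤ f (i + 1) + 1) {a b v : ℕ} (hab : a ≤ b)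
    (hv : v ∈ Set.uIcc (f a) (f b)) : ∃ m ∈ Set.Icc a b, f m = v := by
  induction b, hab using Nat.le_induction with
  | base => exact ⟨a, Set.left_mem_Icc.2 le_rfl, by simp_all⟩
  | succ b hab ih =>
    by_cases h : v ∈ Set.uIcc (f a) (f b)
    · obtain ⟨m, hm, rfl⟩ := ih h
      exact ⟨m, Set.Icc_subset_Icc_right b.le_succ hm, rfl⟩
    · refine ⟨b + 1, Set.right_mem_Icc.2 (by omega), ?_⟩
      simp only [Set.mem_uIcc] at h hv
      have := hf b
      omega

section BinaryWord

variable {w : ℕ → ℕ}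

def windowSum (w : ℕ → ℕ) (i n : ℕ) : ℕ := ∑ j ∈ Finset.range n, w (i + j)

def windowSums (w : ℕ → ℕ) (n : ℕ) : Set ℕ := (windowSum w · n) '' Set.Ici 1

lemma windowSum_succ (i n : ℕ) : windowSum w i (n + 1) = windowSum w i n + w (i + n) :=
  Finset.sum_range_succ _ n

lemma windowSum_succ' (i n : ℕ) : windowSum w i (n + 1) = w i + windowSum w (i + 1) n := by
  simp only [windowSum, Finset.sum_range_succ', add_zero, add_comm, add_left_comm]

lemma windowSum_le (hw : ∀ m, w m ≤ 1) (i n : ℕ) : windowSum w i n ≤ n := by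
  simpa [windowSum] using Finset.sum_le_card_nsmul (Finset.range n) _ 1 fun j _ => hw (i + j)

lemma windowSum_shift_le_add_one (hw : ∀ m, w m ≤ 1) (n i : ℕ) :
    windowSum w (i + 1) n ≤ windowSum w i n + 1 ∧
      windowSum w i n ≤ windowSum w (i + 1) n + 1 := by
  have := windowSum_succ (w := w) i n
  have := windowSum_succ' (w := w) i n
  have := hw i
  have := hw (i + n)
  omega

lemma length_factorAt (i n : ℕ) : (factorAt w i n).length = n := by simp [factorAt]

lemma factorAt_succ (i n : ℕ) : factorAt w i (n + 1) = factorAt w i n ++ [w (i + n)] := by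
  simp [factorAt, List.range_succ]

lemma count_factorAt (hw : ∀ m, w m ≤ 1) (i n : ℕ) :
    (factorAt w i n).count 0 = n - windowSum w i n ∧
      (factorAt w i n).count 1 = windowSum w i n := by
  induction n with
  | zero => simp [factorAt, windowSum]
  | succ n ih =>
    rw [factorAt_succ, windowSum_succ, List.count_append, List.count_append]
    have := windowSum_le hw i n
    rcases Nat.le_one_iff_eq_zero_or_eq_one.mp (hw (i + n)) with h | h <;>
      simp [h, ih, Nat.sub_add_comm this]

lemma rho_eq_ncard_windowSums (hw : ∀ m, w m ≤ 1) (n : ℕ) :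
    rho w n = (windowSums w n).ncard := by
  have hparikh : {p : ℕ × ℕ | ∃ u : List ℕ, IsFactor w u ∧ u.length = n ∧
      p = (u.count 0, u.count 1)} = (fun v => (n - v, v)) '' windowSums w n := by
    ext p
    constructor
    · rintro ⟨u, ⟨i, hi, hu⟩, rfl, rfl⟩
      refine ⟨windowSum w i u.length, ⟨i, hi, rfl⟩, ?_⟩
      rw [hu, (count_factorAt hw i _).1, (count_factorAt hw i _).2, length_factorAt]
    · rintro ⟨_, ⟨i, hi, rfl⟩, rfl⟩
      refine ⟨factorAt w i n, ⟨i, hi, by rw [length_factorAt]⟩, length_factorAt i n, ?_⟩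
      rw [(count_factorAt hw i n).1, (count_factorAt hw i n).2]
  rw [rho, hparikh, Set.ncard_image_of_injective _ fun a b h => congrArg Prod.snd h]

lemma windowSums_subset_Iic (hw : ∀ m, w m ≤ 1) (n : ℕ) : windowSums w n ⊆ Set.Iic n := by
  rintro _ ⟨i, -, rfl⟩
  exact windowSum_le hw i n

lemma windowSums_nonempty (n : ℕ) : (windowSums w n).Nonempty :=
  (Set.nonempty_Ici (a := 1)).image _

lemma bddAbove_windowSums (hw : ∀ m, w m ≤ 1) (n : ℕ) : BddAbove (windowSums w n) :=
  ⟨n, windowSums_subset_Iic hw n⟩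

lemma windowSums_ordConnected (hw : ∀ m, w m ≤ 1) (n : ℕ) :
    (windowSums w n).OrdConnected := by
  refine ⟨?_⟩
  rintro _ ⟨a, ha, rfl⟩ _ ⟨b, hb, rfl⟩ v hv
  have hf := windowSum_shift_le_add_one hw n
  rcases le_total a b with hab | hba
  · obtain ⟨m, hm, rfl⟩ := exists_apply_eq_of_mem_uIcc (f := (windowSum w · n)) hf hab
      (Set.Icc_subset_uIcc hv)
    exact ⟨m, le_trans ha hm.1, rfl⟩
  · obtain ⟨m, hm, rfl⟩ := exists_apply_eq_of_mem_uIcc (f := (windowSum w · n)) hf hba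
      (Set.Icc_subset_uIcc' hv)
    exact ⟨m, le_trans hb hm.1, rfl⟩

lemma ncard_windowSums (hw : ∀ m, w m ≤ 1) (n : ℕ) :
    (windowSums w n).ncard = sSup (windowSums w n) + 1 - sInf (windowSums w n) := by
  have hne := windowSums_nonempty (w := w) n
  have hbdd := bddAbove_windowSums hw n
  have hIcc : windowSums w n = Set.Icc (sInf (windowSums w n)) (sSup (windowSums w n)) :=
    (subset_Icc_csInf_csSup (OrderBot.bddBelow _) hbdd).antisymm <|
      (windowSums_ordConnected hw n).out (Nat.sInf_mem hne) (Nat.sSup_mem hne hbdd)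
  rw [hIcc, Set.ncard_Icc_nat, ← hIcc]

lemma sSup_windowSums_le_succ (hw : ∀ m, w m ≤ 1) (n : ℕ) :
    sSup (windowSums w n) ≤ sSup (windowSums w (n + 1)) ∧
      sSup (windowSums w (n + 1)) ≤ sSup (windowSums w n) + 1 := by
  constructor
  · refine csSup_le (windowSums_nonempty n) ?_
    rintro _ ⟨i, hi, rfl⟩
    calc windowSum w i n ≤ windowSum w i (n + 1) := by rw [windowSum_succ]; omega
      _ ≤ _ := le_csSup (bddAbove_windowSums hw _) ⟨i, hi, rfl⟩
  · refine csSup_le (windowSums_nonempty _) ?_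
    rintro _ ⟨i, hi, rfl⟩
    calc windowSum w i (n + 1) = windowSum w i n + w (i + n) := windowSum_succ i n
      _ ≤ sSup (windowSums w n) + 1 :=
        add_le_add (le_csSup (bddAbove_windowSums hw _) ⟨i, hi, rfl⟩) (hw _)

end BinaryWord

lemma pf_le_one (m : ℕ) : pf m ≤ 1 := by
  unfold pf
  split <;> simp

lemma pf_two_pow_mul (j : ℕ) {q : ℕ} (hq : Odd q) :
    pf (2 ^ j * q) = if q % 4 = 1 then 0 else 1 := by
  have hval : padicValNat 2 (2 ^ j * q) = j := by
    rw [padicValNat.mul (by positivity) (by rintro rfl; simp at hq), padicValNat.prime_pow,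
      padicValNat.eq_zero_of_not_dvd (by simpa [← even_iff_two_dvd] using hq), add_zero]
  rw [pf, hval, Nat.mul_div_cancel_left _ (by positivity)]

lemma pf_add_pf_two_pow_sub {k p : ℕ} (hp : 0 < p) (hpk : p < 2 ^ k) :
    pf p + pf (2 ^ (k + 1) - p) = 1 := by
  obtain ⟨j, q, hq, rfl⟩ := Nat.exists_eq_two_pow_mul_odd hp.ne'
  have hjk : j < k := by
    by_contra! h
    have := Nat.pow_le_pow_right two_pos h
    have := Nat.le_mul_of_pos_right (2 ^ j) hq.pos
    omega
  obtain ⟨r, rfl⟩ := Nat.exists_eq_add_of_lt hjk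
  have hq2 : q < 2 * 2 ^ r := by
    rw [show 2 ^ (j + r + 1) = 2 ^ j * (2 * 2 ^ r) by ring] at hpk
    exact Nat.lt_of_mul_lt_mul_left hpk
  have hsub : 2 ^ (j + r + 1 + 1) - 2 ^ j * q = 2 ^ j * (4 * 2 ^ r - q) := by
    rw [Nat.mul_sub, show 2 ^ (j + r + 1 + 1) = 2 ^ j * (4 * 2 ^ r) by ring]
  have hq' : Odd (4 * 2 ^ r - q) := by
    rw [Nat.odd_iff] at hq ⊢
    omega
  rw [hsub, pf_two_pow_mul _ hq, pf_two_pow_mul _ hq']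
  rw [Nat.odd_iff] at hq
  split_ifs <;> omega

lemma windowSum_pf_reflect_add_windowSum_pf {i n k : ℕ} (hi : 1 ≤ i) (hk : i + n ≤ 2 ^ k) :
    windowSum pf (2 ^ (k + 1) + 1 - (i + n)) n + windowSum pf i n = n := by
  have hpow : 2 ^ k < 2 ^ (k + 1) := Nat.pow_lt_pow_right one_lt_two k.lt_succ_self
  have hpair : ∀ j ∈ Finset.range n,
      pf (2 ^ (k + 1) + 1 - (i + n) + j) + pf (i + (n - 1 - j)) = 1 := by
    intro j hj
    rw [Finset.mem_range] at hj
    rw [add_comm, show 2 ^ (k + 1) + 1 - (i + n) + j = 2 ^ (k + 1) - (i + (n - 1 - j)) by omega]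
    exact pf_add_pf_two_pow_sub (by omega) (by omega)
  rw [windowSum, windowSum, ← Finset.sum_range_reflect (fun j => pf (i + j)),
    ← Finset.sum_add_distrib, Finset.sum_congr rfl hpair]
  simp

lemma sub_mem_windowSums_pf {n v : ℕ} (hv : v ∈ windowSums pf n) :
    n - v ∈ windowSums pf n := by
  obtain ⟨i, hi, rfl⟩ := hv
  have hk : i + n ≤ 2 ^ (i + n) := Nat.lt_two_pow_self.le
  have hsum := windowSum_pf_reflect_add_windowSum_pf hi hk
  refine ⟨2 ^ (i + n + 1) + 1 - (i + n), ?_, by beta_reduce; omega⟩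
  rw [Set.mem_Ici, pow_succ]
  omega

lemma sInf_add_sSup_windowSums_pf (n : ℕ) :
    sInf (windowSums pf n) + sSup (windowSums pf n) = n := by
  have hne := windowSums_nonempty (w := pf) n
  have hbdd := bddAbove_windowSums pf_le_one n
  have hInf := Nat.sInf_mem hne
  have hSup := Nat.sSup_mem hne hbdd
  have : sInf (windowSums pf n) ≤ n - sSup (windowSums pf n) :=
    Nat.sInf_le (sub_mem_windowSums_pf hSup)
  have : n - sInf (windowSums pf n) ≤ sSup (windowSums pf n) :=
    le_csSup hbdd (sub_mem_windowSums_pf hInf)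
  have : sInf (windowSums pf n) ≤ n := windowSums_subset_Iic pf_le_one n hInf
  have : sSup (windowSums pf n) ≤ n := windowSums_subset_Iic pf_le_one n hSup
  omega

lemma rho_pf_add (n : ℕ) : rho pf n + n = 2 * sSup (windowSums pf n) + 1 := by
  have := sInf_add_sSup_windowSums_pf n
  have := csInf_le_csSup (windowSums_nonempty n) (OrderBot.bddBelow _)
    (bddAbove_windowSums pf_le_one n)
  rw [rho_eq_ncard_windowSums pf_le_one, ncard_windowSums pf_le_one]
  omega

theorem paperfolding_abelian_complexity_step_general (n : ℕ) :
    rho pf (n + 1) = rho pf n + 1 ∨ rho pf (n + 1) + 1 = rho pf n := by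
  have h₀ := rho_pf_add n
  have h₁ := rho_pf_add (n + 1)
  have hstep := sSup_windowSums_le_succ pf_le_one n
  omega

/-- For the paperfolding word, `ρ(n+1) = ρ(n) ± 1` for every `n ≥ 1`. -/
theorem paperfolding_abelian_complexity_step (n : ℕ) (hn : 1 ≤ n) :
    rho pf (n + 1) = rho pf n + 1 ∨ rho pf (n + 1) + 1 = rho pf n :=
  paperfolding_abelian_complexity_step_general n
end
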